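/- Let m ≤ n. The sequence d_k = (number of m-subsets A of {1,...,n} with Σ_{a∈A} a − m(m+1)/2 = k), for 0 ≤ k ≤ m(n−m), is symmetric (d_k = d_{m(n−m)−k}) and unimodal. -/

import Mathlib

open Finset

def lamWt {n : ℕ} (A : Finset (Fin n)) : ℕ :=
  (∑ a ∈ A, (a : ℕ)) - A.card * (A.card - 1) / 2

/-- `d_k`: the number of `m`-subsets `A` of `{1,…,n}` with `|λ(A)| = k`,
i.e. `Σ_{a∈A} a − m(m+1)/2 = k`. -/
def dcount (n m k : ℕ) : ℕ :=
  ((Finset.powersetCard m (Finset.univ : Finset (Fin n))).filter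
    (fun A => lamWt A = k)).card

/-!
Proctor's proof. Let `V k` be the `ℚ`-span of the `m`-subsets `A` with `lamWt A = k`, so that
`dim V k = dcount n m k`. Moving one element of a subset up by one, with suitable coefficients,
defines an operator `E` with `E (V k) ⊆ V (k + 1)`. Together with the analogous lowering operator
`F` it forms an `sl₂`-triple whose semisimple element `H = [E, F]` is diagonal on subsets and acts
on `V k` by `2k - m(n - m)`. In a finite-dimensional representation a nonzero vector killed by `E`
has an `H`-eigenvalue in `ℕ`, so `E` is injective on `V k` when `2k < m(n - m)`, which gives
`dcount n m k ≤ dcount n m (k + 1)`. Symmetry comes from the reflection `a ↦ n - 1 - a`.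
-/

lemma choose_two_le_sum (A : Finset ℕ) : A.card.choose 2 ≤ ∑ a ∈ A, a := by
  induction A using Finset.induction_on_max with
  | empty => simp
  | insert a A ha ih =>
    have haA : a ∉ A := fun h => (ha a h).false
    have hcard : A.card ≤ a := by
      simpa using Finset.card_le_card fun x hx => Finset.mem_range.2 (ha x hx)
    rw [Finset.card_insert_of_notMem haA, Finset.sum_insert haA,
      show (A.card + 1).choose 2 = A.card + A.card.choose 2 by simp [Nat.choose_succ_succ']]
    omega

lemma two_mul_choose_two_add_mul_sub {m n : ℕ} (h : m ≤ n) :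
    2 * m.choose 2 + m * (n - m) = m * (n - 1) := by
  obtain ⟨r, rfl⟩ := Nat.exists_eq_add_of_le h
  rw [Nat.choose_two_right, Nat.mul_div_cancel' (Nat.even_mul_pred_self m).two_dvd,
    Nat.add_sub_cancel_left]
  cases m with
  | zero => simp
  | succ m =>
    rw [Nat.add_sub_cancel, Nat.add_right_comm, Nat.add_sub_cancel]
    ring

section LamWt

variable {n : ℕ}

lemma lamWt_add_choose_two (A : Finset (Fin n)) :
    lamWt A + A.card.choose 2 = ∑ a ∈ A, (a : ℕ) := by
  have := choose_two_le_sum (A.map Fin.valEmbedding)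
  simp only [Finset.card_map, Finset.sum_map, Fin.valEmbedding_apply] at this
  rw [lamWt, ← Nat.choose_two_right]
  omega

lemma lamWt_insert_erase {A : Finset (Fin n)} {a b : Fin n} (ha : a ∈ A) (hb : b ∉ A)
    (hab : (b : ℕ) = a + 1) : lamWt (insert b (A.erase a)) = lamWt A + 1 := by
  have hb' : b ∉ A.erase a := fun h => hb (Finset.mem_of_mem_erase h)
  have hcard : (insert b (A.erase a)).card = A.card := by
    rw [Finset.card_insert_of_notMem hb', Finset.card_erase_add_one ha]
  have h1 := lamWt_add_choose_two (insert b (A.erase a))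
  have h2 := lamWt_add_choose_two A
  rw [hcard, Finset.sum_insert hb'] at h1
  rw [← Finset.sum_erase_add _ _ ha] at h2
  omega

lemma lamWt_add_lamWt_map_rev (A : Finset (Fin n)) :
    lamWt A + lamWt (A.map Fin.revPerm.toEmbedding) = A.card * (n - A.card) := by
  have hle : A.card ≤ n := by simpa using Finset.card_le_univ A
  have hsum : ∑ a ∈ A, (a : ℕ) + ∑ a ∈ A.map Fin.revPerm.toEmbedding, (a : ℕ) =
      A.card * (n - 1) := by
    rw [Finset.sum_map, ← Finset.sum_add_distrib, Finset.sum_congr rfl fun a _ => ?_,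
      Finset.sum_const, smul_eq_mul]
    simp only [Equiv.toEmbedding_apply, Fin.revPerm_apply, Fin.val_rev]
    omega
  have h1 := lamWt_add_choose_two A
  have h2 := lamWt_add_choose_two (A.map Fin.revPerm.toEmbedding)
  have h3 := two_mul_choose_two_add_mul_sub hle
  rw [Finset.card_map] at h2
  omega

end LamWt

lemma mem_supported_of_forall_single {R α β : Type*} [Semiring R]
    {f : (α →₀ R) →ₗ[R] (β →₀ R)} {s : Set α} {t : Set β}
    (h : ∀ a ∈ s, f (Finsupp.single a 1) ∈ Finsupp.supported R R t) {x : α →₀ R}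
    (hx : x ∈ Finsupp.supported R R s) : f x ∈ Finsupp.supported R R t := by
  have : Finsupp.supported R R s ≤ (Finsupp.supported R R t).comap f := by
    rw [Finsupp.supported_eq_span_single, Submodule.span_le]
    rintro _ ⟨a, ha, rfl⟩
    exact h a ha
  exact this hx

lemma finrank_supported {R α : Type*} [Ring R] [StrongRankCondition R] (S : Finset α) :
    Module.finrank R (Finsupp.supported R R (S : Set α)) = S.card := by
  rw [(Finsupp.supportedEquivFinsupp (S : Set α)).finrank_eq, Module.finrank_finsupp_self]
  simp

lemma mul_smul_sub_smul_mul {R M : Type*} [CommRing R] [AddCommGroup M] [Module R M]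
    (X Y : Module.End R M) (c : R) : X * (c • Y) - (c • Y) * X = c • (X * Y - Y * X) := by
  rw [mul_smul_comm, smul_mul_assoc, smul_sub]

lemma sum_smul_mul_sum_smul_sub {R M ι κ : Type*} [CommRing R] [AddCommGroup M] [Module R M]
    (s : Finset ι) (t : Finset κ) (c : ι → R) (d : κ → R) (x : ι → Module.End R M)
    (y : κ → Module.End R M) :
    (∑ i ∈ s, c i • x i) * (∑ j ∈ t, d j • y j) - (∑ j ∈ t, d j • y j) * (∑ i ∈ s, c i • x i) =
      ∑ i ∈ s, ∑ j ∈ t, (c i * d j) • (x i * y j - y j * x i) := by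
  rw [Finset.sum_mul_sum, Finset.sum_mul_sum, Finset.sum_comm (s := t), ← Finset.sum_sub_distrib]
  refine Finset.sum_congr rfl fun i _ => ?_
  rw [← Finset.sum_sub_distrib]
  refine Finset.sum_congr rfl fun j _ => ?_
  rw [smul_sub, smul_mul_smul_comm, smul_mul_smul_comm, mul_comm (d j)]

section MoveOperators

variable {α : Type*}

noncomputable def weightOp : (α → ℚ) →ₗ[ℚ] Module.End ℚ (Finset α →₀ ℚ) where
  toFun κ := Finsupp.linearCombination ℚ fun A => (∑ x ∈ A, κ x) • Finsupp.single A 1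
  map_add' κ κ' := by ext; simp [Finset.sum_add_distrib, add_smul]
  map_smul' c κ := by ext; simp [← Finset.mul_sum, mul_smul]

@[simp] lemma weightOp_single (κ : α → ℚ) (A : Finset α) (r : ℚ) :
    weightOp κ (Finsupp.single A r) = (∑ x ∈ A, κ x) • Finsupp.single A r := by
  simp [weightOp, Finsupp.smul_single, mul_comm]

lemma weightOp_eq_smul_of_mem_supported {κ : α → ℚ} {s : Set (Finset α)} {μ : ℚ}
    (hs : ∀ A ∈ s, ∑ x ∈ A, κ x = μ) {v : Finset α →₀ ℚ} (hv : v ∈ Finsupp.supported ℚ ℚ s) :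
    weightOp κ v = μ • v := by
  rw [Finsupp.supported_eq_span_single] at hv
  refine LinearMap.eqOn_span' (g := μ • LinearMap.id) ?_ hv
  rintro _ ⟨A, hA, rfl⟩
  simp [hs A hA]

variable [DecidableEq α]

noncomputable def moveOp (a b : α) : Module.End ℚ (Finset α →₀ ℚ) :=
  Finsupp.linearCombination ℚ fun A =>
    if a ∈ A ∧ b ∉ A then Finsupp.single (insert b (A.erase a)) 1 else 0

@[simp] lemma moveOp_single (a b : α) (A : Finset α) (r : ℚ) :
    moveOp a b (Finsupp.single A r) =
      if a ∈ A ∧ b ∉ A then Finsupp.single (insert b (A.erase a)) r else 0 := by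
  simp [moveOp]

lemma commute_moveOp {a b c d : α} (had : a ≠ d) (hbc : b ≠ c) :
    Commute (moveOp a b) (moveOp c d) := by
  ext A : 2
  by_cases h : c ∈ A ∧ d ∉ A <;> by_cases h' : a ∈ A ∧ b ∉ A <;> simp [h, h']
  all_goals grind

lemma moveOp_mul_moveOp_swap_sub {a b : α} (hab : a ≠ b) :
    moveOp a b * moveOp b a - moveOp b a * moveOp a b =
      weightOp (Pi.single b 1 - Pi.single a 1) := by
  ext A : 2
  by_cases ha : a ∈ A <;> by_cases hb : b ∈ A <;> simp [ha, hb, hab, hab.symm]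

lemma weightOp_mul_moveOp_sub (κ : α → ℚ) (a b : α) :
    weightOp κ * moveOp a b - moveOp a b * weightOp κ = (κ b - κ a) • moveOp a b := by
  ext A : 2
  by_cases h : a ∈ A ∧ b ∉ A <;> simp [h]
  abel

end MoveOperators

section SubsetSl2

variable (N : ℕ)

/- The coefficients are those of the irreducible `sl₂`-module of dimension `N + 1`
(`E eₐ = (a + 1) eₐ₊₁`, `F eₐ₊₁ = (N - a) eₐ`), acting on subsets as on wedge products. -/
noncomputable def raiseOp : Module.End ℚ (Finset (Fin (N + 1)) →₀ ℚ) :=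
  ∑ i : Fin N, ((i : ℚ) + 1) • moveOp i.castSucc i.succ

noncomputable def lowerOp : Module.End ℚ (Finset (Fin (N + 1)) →₀ ℚ) :=
  ∑ i : Fin N, ((N : ℚ) - i) • moveOp i.succ i.castSucc

def levelWeight (x : Fin (N + 1)) : ℚ := 2 * x - N

variable {N}

lemma sum_smul_pi_single_sub_eq_levelWeight :
    ∑ i : Fin N, (((i : ℚ) + 1) * (N - i)) •
      (Pi.single i.succ 1 - Pi.single i.castSucc 1 : Fin (N + 1) → ℚ) = levelWeight N := by
  have hsucc : ∑ i : Fin N, Pi.single i.succ (((i : ℚ) + 1) * (N - i)) =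
      fun x : Fin (N + 1) => (x : ℚ) * (N + 1 - x) := by
    rw [← Finset.univ_sum_single fun x : Fin (N + 1) => (x : ℚ) * (N + 1 - x), Fin.sum_univ_succ]
    simp only [Fin.val_zero, Nat.cast_zero, zero_mul, Pi.single_zero, zero_add, Fin.val_succ,
      Nat.cast_add, Nat.cast_one]
    congr! 2
    ring
  have hcast : ∑ i : Fin N, Pi.single i.castSucc (((i : ℚ) + 1) * (N - i)) =
      fun x : Fin (N + 1) => ((x : ℚ) + 1) * (N - x) := by
    rw [← Finset.univ_sum_single fun x : Fin (N + 1) => ((x : ℚ) + 1) * (N - x),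
      Fin.sum_univ_castSucc]
    simp
  simp only [smul_sub, ← Pi.single_smul', smul_eq_mul, mul_one, Finset.sum_sub_distrib, hsucc,
    hcast]
  funext x
  simp only [Pi.sub_apply, levelWeight]
  ring

lemma raiseOp_mul_lowerOp_sub :
    raiseOp N * lowerOp N - lowerOp N * raiseOp N = weightOp (levelWeight N) := by
  rw [raiseOp, lowerOp, sum_smul_mul_sum_smul_sub, ← sum_smul_pi_single_sub_eq_levelWeight,
    map_sum]
  refine Finset.sum_congr rfl fun i _ => ?_
  rw [Finset.sum_eq_single i, moveOp_mul_moveOp_swap_sub (Fin.castSucc_lt_succ).ne, map_smul]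
  · intro j _ hji
    rw [(commute_moveOp ((Fin.castSucc_injective N).ne hji.symm)
      ((Fin.succ_injective N).ne hji.symm)).eq, sub_self, smul_zero]
  · simp

lemma weightOp_mul_raiseOp_sub :
    weightOp (levelWeight N) * raiseOp N - raiseOp N * weightOp (levelWeight N) =
      (2 : ℚ) • raiseOp N := by
  rw [raiseOp, Finset.mul_sum, Finset.sum_mul, ← Finset.sum_sub_distrib, Finset.smul_sum]
  refine Finset.sum_congr rfl fun i _ => ?_
  have hκ : levelWeight N i.succ - levelWeight N i.castSucc = 2 := by simp [levelWeight]; ring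
  rw [mul_smul_sub_smul_mul, weightOp_mul_moveOp_sub, hκ, smul_comm]

lemma weightOp_mul_lowerOp_sub :
    weightOp (levelWeight N) * lowerOp N - lowerOp N * weightOp (levelWeight N) =
      -((2 : ℚ) • lowerOp N) := by
  rw [lowerOp, Finset.mul_sum, Finset.sum_mul, ← Finset.sum_sub_distrib, Finset.smul_sum,
    ← Finset.sum_neg_distrib]
  refine Finset.sum_congr rfl fun i _ => ?_
  have hκ : levelWeight N i.castSucc - levelWeight N i.succ = -2 := by simp [levelWeight]; ring
  rw [mul_smul_sub_smul_mul, weightOp_mul_moveOp_sub, hκ, smul_comm]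
  module

end SubsetSl2

def lamLevel (n m k : ℕ) : Finset (Finset (Fin n)) := {A ∈ powersetCard m univ | lamWt A = k}

lemma dcount_eq_card_lamLevel (n m k : ℕ) : dcount n m k = (lamLevel n m k).card := rfl

lemma sum_levelWeight {N : ℕ} (A : Finset (Fin (N + 1))) :
    ∑ x ∈ A, levelWeight N x = 2 * (lamWt A : ℚ) - (A.card * (N + 1 - A.card) : ℕ) := by
  have hle : A.card ≤ N + 1 := by simpa using Finset.card_le_univ A
  have h1 : ((lamWt A + A.card.choose 2 : ℕ) : ℚ) = ∑ x ∈ A, ((x : ℕ) : ℚ) := by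
    rw [lamWt_add_choose_two]
    push_cast
    rfl
  have h2 : ((2 * A.card.choose 2 + A.card * (N + 1 - A.card) : ℕ) : ℚ) = A.card * N := by
    rw [two_mul_choose_two_add_mul_sub hle]
    push_cast
    rfl
  simp only [levelWeight, Finset.sum_sub_distrib, ← Finset.mul_sum, Finset.sum_const,
    nsmul_eq_mul]
  push_cast at h1 h2 ⊢
  linarith

lemma raiseOp_mem_supported_lamLevel {N m k : ℕ} {v : Finset (Fin (N + 1)) →₀ ℚ}
    (hv : v ∈ Finsupp.supported ℚ ℚ (lamLevel (N + 1) m k : Set (Finset (Fin (N + 1))))) :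
    raiseOp N v ∈ Finsupp.supported ℚ ℚ (lamLevel (N + 1) m (k + 1) : Set _) := by
  refine mem_supported_of_forall_single (fun A hA => ?_) hv
  simp only [raiseOp, LinearMap.sum_apply, LinearMap.smul_apply, moveOp_single]
  refine Submodule.sum_mem _ fun i _ => Submodule.smul_mem _ _ ?_
  split_ifs with h
  · refine Finsupp.single_mem_supported ℚ 1 ?_
    simp only [Finset.mem_coe, lamLevel, Finset.mem_filter, Finset.mem_powersetCard] at hA ⊢
    have hb : i.succ ∉ A.erase i.castSucc := fun hb => h.2 (Finset.mem_of_mem_erase hb)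
    refine ⟨⟨Finset.subset_univ _, ?_⟩, ?_⟩
    · rw [Finset.card_insert_of_notMem hb, Finset.card_erase_add_one h.1, hA.1.2]
    · rw [lamWt_insert_erase h.1 h.2 (by simp), hA.2]
  · exact zero_mem _

section LieBracket

/- Mathlib makes the commutator bracket on `Module.End` only a local instance. -/
attribute [local instance] LieRing.ofAssociativeRing

lemma isSl2Triple_raiseOp_lowerOp {N : ℕ} (hN : N ≠ 0) :
    IsSl2Triple (weightOp (levelWeight N)) (raiseOp N) (lowerOp N) where
  h_ne_zero h0 := by
    have := congr($h0 (Finsupp.single {0} 1))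
    simp [levelWeight, hN] at this
  lie_e_f := raiseOp_mul_lowerOp_sub
  lie_h_e_nsmul := by
    rw [LieRing.of_associative_ring_bracket, weightOp_mul_raiseOp_sub, ofNat_smul_eq_nsmul]
  lie_h_f_nsmul := by
    rw [LieRing.of_associative_ring_bracket, weightOp_mul_lowerOp_sub, ofNat_smul_eq_nsmul]

lemma eq_zero_of_raiseOp_eq_zero {N m k : ℕ} (hk : 2 * k < m * (N + 1 - m))
    {v : Finset (Fin (N + 1)) →₀ ℚ}
    (hv : v ∈ Finsupp.supported ℚ ℚ (lamLevel (N + 1) m k : Set (Finset (Fin (N + 1)))))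
    (hraise : raiseOp N v = 0) : v = 0 := by
  by_contra hne
  have hN : N ≠ 0 := by
    rintro rfl
    rcases Nat.lt_or_ge m 1 with h | h
    · simp [Nat.lt_one_iff.1 h] at hk
    · simp [Nat.sub_eq_zero_of_le h] at hk
  have hweight : weightOp (levelWeight N) v = (2 * (k : ℚ) - (m * (N + 1 - m) : ℕ)) • v := by
    refine weightOp_eq_smul_of_mem_supported (fun A hA => ?_) hv
    simp only [Finset.mem_coe, lamLevel, Finset.mem_filter, Finset.mem_powersetCard] at hA
    rw [sum_levelWeight, hA.1.2, hA.2]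
  have hprim : (isSl2Triple_raiseOp_lowerOp hN).HasPrimitiveVectorWith v _ :=
    ⟨hne, hweight, hraise⟩
  obtain ⟨j, hj⟩ := hprim.exists_nat
  have : (2 * k : ℚ) < (m * (N + 1 - m) : ℕ) := by exact_mod_cast hk
  linarith [(j.cast_nonneg : (0 : ℚ) ≤ j)]

end LieBracket

lemma dcount_le_dcount_succ {n m k : ℕ} (hk : 2 * k < m * (n - m)) :
    dcount n m k ≤ dcount n m (k + 1) := by
  rcases n with _ | N
  · simp at hk
  rw [dcount_eq_card_lamLevel, dcount_eq_card_lamLevel, ← finrank_supported (R := ℚ),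
    ← finrank_supported (R := ℚ)]
  refine LinearMap.finrank_le_finrank_of_injective
    (f := (raiseOp N).restrict fun v hv => raiseOp_mem_supported_lamLevel hv) ?_
  rw [← LinearMap.ker_eq_bot, LinearMap.ker_eq_bot']
  rintro ⟨v, hv⟩ h
  exact Subtype.ext (eq_zero_of_raiseOp_eq_zero hk hv (congrArg Subtype.val h))

lemma dcount_mono {n m k l : ℕ} (hkl : k ≤ l) (hl : 2 * l ≤ m * (n - m) + 1) :
    dcount n m k ≤ dcount n m l := by
  induction l, hkl using Nat.le_induction with
  | base => exact le_rfl
  | succ l _ ih => exact (ih (by omega)).trans (dcount_le_dcount_succ (by omega))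

lemma map_rev_mem_lamLevel_iff {n m k : ℕ} {A : Finset (Fin n)} (hk : k ≤ m * (n - m)) :
    A.map Fin.revPerm.toEmbedding ∈ lamLevel n m (m * (n - m) - k) ↔ A ∈ lamLevel n m k := by
  have := lamWt_add_lamWt_map_rev A
  simp only [lamLevel, Finset.mem_filter, Finset.mem_powersetCard, Finset.subset_univ, true_and,
    Finset.card_map]
  constructor <;> rintro ⟨rfl, h⟩ <;> exact ⟨rfl, by omega⟩

lemma dcount_symm {n m k : ℕ} (hk : k ≤ m * (n - m)) :
    dcount n m k = dcount n m (m * (n - m) - k) :=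
  Finset.card_equiv (Equiv.finsetCongr Fin.revPerm) fun _ => (map_rev_mem_lamLevel_iff hk).symm

lemma dcount_eq_zero {n m k : ℕ} (hk : m * (n - m) < k) : dcount n m k = 0 := by
  rw [dcount_eq_card_lamLevel, Finset.card_eq_zero, Finset.eq_empty_iff_forall_notMem]
  intro A hA
  simp only [lamLevel, Finset.mem_filter, Finset.mem_powersetCard] at hA
  have := lamWt_add_lamWt_map_rev A
  rw [hA.1.2] at this
  omega

theorem dcount_symmetric_unimodal_general (n m : ℕ) :
    (∀ k ≤ m * (n - m), dcount n m k = dcount n m (m * (n - m) - k))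
    ∧ ∃ k0 ≤ m * (n - m),
        (∀ k l, k ≤ l → l ≤ k0 → dcount n m k ≤ dcount n m l)
        ∧ (∀ k l, k0 ≤ k → k ≤ l → dcount n m l ≤ dcount n m k) := by
  refine ⟨fun k hk => dcount_symm hk, (m * (n - m) + 1) / 2, by omega,
    fun k l hkl hl => dcount_mono hkl (by omega), fun k l hk hkl => ?_⟩
  rcases le_or_gt l (m * (n - m)) with hl | hl
  · rw [dcount_symm hl, dcount_symm (hkl.trans hl)]
    exact dcount_mono (by omega) (by omega)
  · rw [dcount_eq_zero hl]
    exact Nat.zero_le _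

/-- the sequence `d_k`, `0 ≤ k ≤ m(n−m)`, is symmetric
(`d_k = d_{m(n−m)−k}`) and unimodal. -/
theorem dcount_symmetric_unimodal (n m : ℕ) (h : m ≤ n) :
    (∀ k ≤ m * (n - m), dcount n m k = dcount n m (m * (n - m) - k))
    ∧ ∃ k0 ≤ m * (n - m),
        (∀ k l, k ≤ l → l ≤ k0 → dcount n m k ≤ dcount n m l)
        ∧ (∀ k l, k0 ≤ k → k ≤ l → dcount n m l ≤ dcount n m k) :=
  dcount_symmetric_unimodal_general n m
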